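/- For any two formulas F and F′, the translations ⟦F⟧ and ⟦F′⟧ are isomorphic as labeled mixed graphs if and only if F and F′ are equivalent modulo associativity and commutativity of ⊗ and of ⅋. -/

import Mathlib

/-! # Formulas of multiplicative exponential linear logic with the placeholder `∘` -/

inductive Formula where
  | atom  : ℕ → Formula
  | natom : ℕ → Formula
  | parr  : Formula → Formula → Formula
  | tens  : Formula → Formula → Formula
  | bang  : Formula → Formula
  | quest : Formula → Formula
  | bot   : Formula
  | one   : Formula
  | hole  : Formula
  deriving DecidableEq

namespace Formula

/-- A MELL-formula: a formula with no occurrence of the placeholder `∘`. -/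
def isMELL : Formula → Prop
  | atom _   => True
  | natom _  => True
  | parr A B => isMELL A ∧ isMELL B
  | tens A B => isMELL A ∧ isMELL B
  | bang A   => isMELL A
  | quest A  => isMELL A
  | bot      => True
  | one      => True
  | hole     => False

/-- A formula without modalities (no `!` and no `?`). -/
def noMod : Formula → Prop
  | atom _   => True
  | natom _  => True
  | parr A B => noMod A ∧ noMod B
  | tens A B => noMod A ∧ noMod B
  | bang _   => False
  | quest _  => False
  | bot      => True
  | one      => True
  | hole     => True

/-- A formula of multiplicative linear logic with units:
built from atoms, dual atoms, `⊗`, `⅋`, `1`, `⊥`; no `∘`, `!`, `?`. -/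
def isMLLu : Formula → Prop
  | atom _   => True
  | natom _  => True
  | parr A B => isMLLu A ∧ isMLLu B
  | tens A B => isMLLu A ∧ isMLLu B
  | bang _   => False
  | quest _  => False
  | bot      => True
  | one      => True
  | hole     => False

/-- Linear negation, defined through the De Morgan laws. -/
def dual : Formula → Formula
  | atom a   => natom a
  | natom a  => atom a
  | parr A B => tens (dual A) (dual B)
  | tens A B => parr (dual A) (dual B)
  | bang A   => quest (dual A)
  | quest A  => bang (dual A)
  | bot      => one
  | one      => bot
  | hole     => hole

/-- `questN n F` is `?ⁿ F`. -/
def questN : ℕ → Formula → Formula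
  | 0,     A => A
  | n + 1, A => quest (questN n A)

/-- A weaken-contradiction: a formula `?ⁿ(A ⊗ Ā)` with `A` a MELL-formula. -/
def isWeakenContradiction (C : Formula) : Prop :=
  ∃ (n : ℕ) (A : Formula), A.isMELL ∧ C = questN n (tens A (dual A))

end Formula

/-- A sequent is a (non-empty) multiset of formulas. -/
abbrev Sequent := Multiset Formula

/-! ## Sequent systems -/

/-- The system MLL = {ax, ⊗, ⅋} (it coincides with the linear system MLLˡ). -/
inductive ProvMLL : Sequent → Prop
  | ax (a : ℕ) : ProvMLL {Formula.atom a, Formula.natom a}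
  | parr (Γ : Sequent) (A B : Formula) :
      ProvMLL (A ::ₘ B ::ₘ Γ) → ProvMLL (Formula.parr A B ::ₘ Γ)
  | tens (Γ Δ : Sequent) (A B : Formula) :
      ProvMLL (A ::ₘ Γ) → ProvMLL (B ::ₘ Δ) →
      ProvMLL (Formula.tens A B ::ₘ (Γ + Δ))

/-- The system MLLu = {ax, ⊗, ⅋, ⊥, 1}. -/
inductive ProvMLLu : Sequent → Prop
  | ax (a : ℕ) : ProvMLLu {Formula.atom a, Formula.natom a}
  | parr (Γ : Sequent) (A B : Formula) :
      ProvMLLu (A ::ₘ B ::ₘ Γ) → ProvMLLu (Formula.parr A B ::ₘ Γ)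
  | tens (Γ Δ : Sequent) (A B : Formula) :
      ProvMLLu (A ::ₘ Γ) → ProvMLLu (B ::ₘ Δ) →
      ProvMLLu (Formula.tens A B ::ₘ (Γ + Δ))
  | bot (Γ : Sequent) : ProvMLLu Γ → ProvMLLu (Formula.bot ::ₘ Γ)
  | one : ProvMLLu {Formula.one}

/-- The system MELL = {ax, ⊗, ⅋, ⊥, 1, !p, der, w?, c?}. -/
inductive ProvMELL : Sequent → Prop
  | ax (a : ℕ) : ProvMELL {Formula.atom a, Formula.natom a}
  | parr (Γ : Sequent) (A B : Formula) :
      ProvMELL (A ::ₘ B ::ₘ Γ) → ProvMELL (Formula.parr A B ::ₘ Γ)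
  | tens (Γ Δ : Sequent) (A B : Formula) :
      ProvMELL (A ::ₘ Γ) → ProvMELL (B ::ₘ Δ) →
      ProvMELL (Formula.tens A B ::ₘ (Γ + Δ))
  | bot (Γ : Sequent) : ProvMELL Γ → ProvMELL (Formula.bot ::ₘ Γ)
  | one : ProvMELL {Formula.one}
  | prom (Γ : Sequent) (A : Formula) :
      ProvMELL (A ::ₘ Γ.map Formula.quest) →
      ProvMELL (Formula.bang A ::ₘ Γ.map Formula.quest)
  | der (Γ : Sequent) (A : Formula) :
      ProvMELL (A ::ₘ Γ) → ProvMELL (Formula.quest A ::ₘ Γ)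
  | weak (Γ : Sequent) (A : Formula) :
      ProvMELL Γ → ProvMELL (Formula.quest A ::ₘ Γ)
  | contr (Γ : Sequent) (A : Formula) :
      ProvMELL (Formula.quest A ::ₘ Formula.quest A ::ₘ Γ) →
      ProvMELL (Formula.quest A ::ₘ Γ)

/-- The system MLLu^j = {ax_j, 1_j, ⊥^j, ⅋, ⊗}. -/
inductive ProvMLLuj : Sequent → Prop
  | axj (a n : ℕ) :
      ProvMLLuj (Formula.atom a ::ₘ Formula.natom a ::ₘ Multiset.replicate n Formula.hole)
  | onej (n : ℕ) : ProvMLLuj (Formula.one ::ₘ Multiset.replicate n Formula.hole)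
  | botj (Γ : Sequent) :
      ProvMLLuj (Formula.hole ::ₘ Γ) → ProvMLLuj (Formula.bot ::ₘ Γ)
  | parr (Γ : Sequent) (A B : Formula) :
      ProvMLLuj (A ::ₘ B ::ₘ Γ) → ProvMLLuj (Formula.parr A B ::ₘ Γ)
  | tens (Γ Δ : Sequent) (A B : Formula) :
      ProvMLLuj (A ::ₘ Γ) → ProvMLLuj (B ::ₘ Δ) →
      ProvMLLuj (Formula.tens A B ::ₘ (Γ + Δ))

/-- The system MELL^j = {ax_j, 1_j, ⊥^j, w^j, ⅋, ⊗, w!p, der, dig?, dig∘, c?}. -/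
inductive ProvMELLj : Sequent → Prop
  | axj (a n : ℕ) :
      ProvMELLj (Formula.atom a ::ₘ Formula.natom a ::ₘ Multiset.replicate n Formula.hole)
  | onej (n : ℕ) : ProvMELLj (Formula.one ::ₘ Multiset.replicate n Formula.hole)
  | botj (Γ : Sequent) :
      ProvMELLj (Formula.hole ::ₘ Γ) → ProvMELLj (Formula.bot ::ₘ Γ)
  | wj (Γ : Sequent) (A : Formula) :
      ProvMELLj (Formula.hole ::ₘ Γ) → ProvMELLj (Formula.quest A ::ₘ Γ)
  | parr (Γ : Sequent) (A B : Formula) :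
      ProvMELLj (A ::ₘ B ::ₘ Γ) → ProvMELLj (Formula.parr A B ::ₘ Γ)
  | tens (Γ Δ : Sequent) (A B : Formula) :
      ProvMELLj (A ::ₘ Γ) → ProvMELLj (B ::ₘ Δ) →
      ProvMELLj (Formula.tens A B ::ₘ (Γ + Δ))
  | wprom (Γ : Sequent) (A : Formula) :
      ProvMELLj (A ::ₘ Γ) → ProvMELLj (Formula.bang A ::ₘ Γ.map Formula.quest)
  | der (Γ : Sequent) (A : Formula) :
      ProvMELLj (A ::ₘ Γ) → ProvMELLj (Formula.quest A ::ₘ Γ)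
  | dig (Γ : Sequent) (A : Formula) :
      ProvMELLj (Formula.quest (Formula.quest A) ::ₘ Γ) →
      ProvMELLj (Formula.quest A ::ₘ Γ)
  | digo (Γ : Sequent) :
      ProvMELLj (Formula.quest Formula.hole ::ₘ Γ) → ProvMELLj (Formula.hole ::ₘ Γ)
  | contr (Γ : Sequent) (A : Formula) :
      ProvMELLj (Formula.quest A ::ₘ Formula.quest A ::ₘ Γ) →
      ProvMELLj (Formula.quest A ::ₘ Γ)

/-- The system MELL^j extended with the cut rule (cut formulas are MELL-formulas). -/
inductive ProvMELLjCut : Sequent → Prop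
  | axj (a n : ℕ) :
      ProvMELLjCut (Formula.atom a ::ₘ Formula.natom a ::ₘ Multiset.replicate n Formula.hole)
  | onej (n : ℕ) : ProvMELLjCut (Formula.one ::ₘ Multiset.replicate n Formula.hole)
  | botj (Γ : Sequent) :
      ProvMELLjCut (Formula.hole ::ₘ Γ) → ProvMELLjCut (Formula.bot ::ₘ Γ)
  | wj (Γ : Sequent) (A : Formula) :
      ProvMELLjCut (Formula.hole ::ₘ Γ) → ProvMELLjCut (Formula.quest A ::ₘ Γ)
  | parr (Γ : Sequent) (A B : Formula) :
      ProvMELLjCut (A ::ₘ B ::ₘ Γ) → ProvMELLjCut (Formula.parr A B ::ₘ Γ)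
  | tens (Γ Δ : Sequent) (A B : Formula) :
      ProvMELLjCut (A ::ₘ Γ) → ProvMELLjCut (B ::ₘ Δ) →
      ProvMELLjCut (Formula.tens A B ::ₘ (Γ + Δ))
  | wprom (Γ : Sequent) (A : Formula) :
      ProvMELLjCut (A ::ₘ Γ) → ProvMELLjCut (Formula.bang A ::ₘ Γ.map Formula.quest)
  | der (Γ : Sequent) (A : Formula) :
      ProvMELLjCut (A ::ₘ Γ) → ProvMELLjCut (Formula.quest A ::ₘ Γ)
  | dig (Γ : Sequent) (A : Formula) :
      ProvMELLjCut (Formula.quest (Formula.quest A) ::ₘ Γ) →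
      ProvMELLjCut (Formula.quest A ::ₘ Γ)
  | digo (Γ : Sequent) :
      ProvMELLjCut (Formula.quest Formula.hole ::ₘ Γ) → ProvMELLjCut (Formula.hole ::ₘ Γ)
  | contr (Γ : Sequent) (A : Formula) :
      ProvMELLjCut (Formula.quest A ::ₘ Formula.quest A ::ₘ Γ) →
      ProvMELLjCut (Formula.quest A ::ₘ Γ)
  | cut (Γ Δ : Sequent) (A : Formula) :
      A.isMELL → ProvMELLjCut (A ::ₘ Γ) → ProvMELLjCut (A.dual ::ₘ Δ) →
      ProvMELLjCut (Γ + Δ)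

/-- The linear system MLLu^ℓ = {ax_j, 1_j, ⅋, ⊗}. -/
inductive ProvMLLuLin : Sequent → Prop
  | axj (a n : ℕ) :
      ProvMLLuLin (Formula.atom a ::ₘ Formula.natom a ::ₘ Multiset.replicate n Formula.hole)
  | onej (n : ℕ) : ProvMLLuLin (Formula.one ::ₘ Multiset.replicate n Formula.hole)
  | parr (Γ : Sequent) (A B : Formula) :
      ProvMLLuLin (A ::ₘ B ::ₘ Γ) → ProvMLLuLin (Formula.parr A B ::ₘ Γ)
  | tens (Γ Δ : Sequent) (A B : Formula) :
      ProvMLLuLin (A ::ₘ Γ) → ProvMLLuLin (B ::ₘ Δ) →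
      ProvMLLuLin (Formula.tens A B ::ₘ (Γ + Δ))

/-- The linear system MELL^ℓ = {ax_j, 1_j, ⅋, ⊗, w!p}. -/
inductive ProvMELLLin : Sequent → Prop
  | axj (a n : ℕ) :
      ProvMELLLin (Formula.atom a ::ₘ Formula.natom a ::ₘ Multiset.replicate n Formula.hole)
  | onej (n : ℕ) : ProvMELLLin (Formula.one ::ₘ Multiset.replicate n Formula.hole)
  | parr (Γ : Sequent) (A B : Formula) :
      ProvMELLLin (A ::ₘ B ::ₘ Γ) → ProvMELLLin (Formula.parr A B ::ₘ Γ)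
  | tens (Γ Δ : Sequent) (A B : Formula) :
      ProvMELLLin (A ::ₘ Γ) → ProvMELLLin (B ::ₘ Δ) →
      ProvMELLLin (Formula.tens A B ::ₘ (Γ + Δ))
  | wprom (Γ : Sequent) (A : Formula) :
      ProvMELLLin (A ::ₘ Γ) → ProvMELLLin (Formula.bang A ::ₘ Γ.map Formula.quest)

/-- MELL with the cut rule, recording the list of active cut formulas of the derivation. -/
inductive ProvMELLCutL : Sequent → List Formula → Prop
  | ax (a : ℕ) : ProvMELLCutL {Formula.atom a, Formula.natom a} []
  | parr (Γ : Sequent) (A B : Formula) (L : List Formula) :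
      ProvMELLCutL (A ::ₘ B ::ₘ Γ) L → ProvMELLCutL (Formula.parr A B ::ₘ Γ) L
  | tens (Γ Δ : Sequent) (A B : Formula) (L₁ L₂ : List Formula) :
      ProvMELLCutL (A ::ₘ Γ) L₁ → ProvMELLCutL (B ::ₘ Δ) L₂ →
      ProvMELLCutL (Formula.tens A B ::ₘ (Γ + Δ)) (L₁ ++ L₂)
  | bot (Γ : Sequent) (L : List Formula) :
      ProvMELLCutL Γ L → ProvMELLCutL (Formula.bot ::ₘ Γ) L
  | one : ProvMELLCutL {Formula.one} []
  | prom (Γ : Sequent) (A : Formula) (L : List Formula) :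
      ProvMELLCutL (A ::ₘ Γ.map Formula.quest) L →
      ProvMELLCutL (Formula.bang A ::ₘ Γ.map Formula.quest) L
  | der (Γ : Sequent) (A : Formula) (L : List Formula) :
      ProvMELLCutL (A ::ₘ Γ) L → ProvMELLCutL (Formula.quest A ::ₘ Γ) L
  | weak (Γ : Sequent) (A : Formula) (L : List Formula) :
      ProvMELLCutL Γ L → ProvMELLCutL (Formula.quest A ::ₘ Γ) L
  | contr (Γ : Sequent) (A : Formula) (L : List Formula) :
      ProvMELLCutL (Formula.quest A ::ₘ Formula.quest A ::ₘ Γ) L →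
      ProvMELLCutL (Formula.quest A ::ₘ Γ) L
  | cut (Γ Δ : Sequent) (A : Formula) (L₁ L₂ : List Formula) :
      A.isMELL → ProvMELLCutL (A ::ₘ Γ) L₁ → ProvMELLCutL (A.dual ::ₘ Δ) L₂ →
      ProvMELLCutL (Γ + Δ) (A :: (L₁ ++ L₂))

/-! ## Deep inference rewriting -/

/-- Closure of a rewrite relation under arbitrary formula contexts. -/
inductive Deep (r : Formula → Formula → Prop) : Formula → Formula → Prop
  | base {A B : Formula} : r A B → Deep r A B
  | parrL {A A' : Formula} (B : Formula) :
      Deep r A A' → Deep r (Formula.parr A B) (Formula.parr A' B)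
  | parrR (A : Formula) {B B' : Formula} :
      Deep r B B' → Deep r (Formula.parr A B) (Formula.parr A B')
  | tensL {A A' : Formula} (B : Formula) :
      Deep r A A' → Deep r (Formula.tens A B) (Formula.tens A' B)
  | tensR (A : Formula) {B B' : Formula} :
      Deep r B B' → Deep r (Formula.tens A B) (Formula.tens A B')
  | bang {A A' : Formula} : Deep r A A' → Deep r (Formula.bang A) (Formula.bang A')
  | quest {A A' : Formula} : Deep r A A' → Deep r (Formula.quest A) (Formula.quest A')

/-- Base steps of all the deep-MELL rules:
deep dereliction, deep digging, deep ∘-digging, deep ⊥, deep weakening, deep contraction. -/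
inductive DeepMELLBase : Formula → Formula → Prop
  | der (A : Formula) : DeepMELLBase A (Formula.quest A)
  | dig (A : Formula) :
      DeepMELLBase (Formula.quest (Formula.quest A)) (Formula.quest A)
  | digHole : DeepMELLBase (Formula.quest Formula.hole) Formula.hole
  | bot : DeepMELLBase Formula.hole Formula.bot
  | weak (A : Formula) : DeepMELLBase Formula.hole (Formula.quest A)
  | contr (A : Formula) :
      DeepMELLBase (Formula.parr (Formula.quest A) (Formula.quest A)) (Formula.quest A)

/-- Base steps of deep dereliction, deep digging and deep ∘-digging. -/
inductive DigBase : Formula → Formula → Prop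
  | der (A : Formula) : DigBase A (Formula.quest A)
  | dig (A : Formula) : DigBase (Formula.quest (Formula.quest A)) (Formula.quest A)
  | digHole : DigBase (Formula.quest Formula.hole) Formula.hole

/-- Base steps of deep weakening and deep ⊥. -/
inductive WeakBase : Formula → Formula → Prop
  | bot : WeakBase Formula.hole Formula.bot
  | weak (A : Formula) : WeakBase Formula.hole (Formula.quest A)

/-- Base step of deep contraction. -/
inductive ContrBase : Formula → Formula → Prop
  | contr (A : Formula) :
      ContrBase (Formula.parr (Formula.quest A) (Formula.quest A)) (Formula.quest A)

/-- Base steps of deep ⊥, deep weakening, deep ?-contraction, deep ∘-contraction,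
and the deep associativity-commutativity rules. -/
inductive WCACBase : Formula → Formula → Prop
  | bot : WCACBase Formula.hole Formula.bot
  | weak (A : Formula) : WCACBase Formula.hole (Formula.quest A)
  | contr (A : Formula) :
      WCACBase (Formula.parr (Formula.quest A) (Formula.quest A)) (Formula.quest A)
  | contrHole :
      WCACBase (Formula.parr Formula.hole Formula.hole) Formula.hole
  | tensAssoc (A B C : Formula) :
      WCACBase (Formula.tens (Formula.tens A B) C) (Formula.tens A (Formula.tens B C))
  | parrAssoc (A B C : Formula) :
      WCACBase (Formula.parr (Formula.parr A B) C) (Formula.parr A (Formula.parr B C))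
  | tensComm (A B : Formula) : WCACBase (Formula.tens A B) (Formula.tens B A)
  | parrComm (A B : Formula) : WCACBase (Formula.parr A B) (Formula.parr B A)

/-- One deep rewriting step inside a sequent: rewrite one member of the multiset. -/
def SeqStep (r : Formula → Formula → Prop) (Γ Γ' : Sequent) : Prop :=
  ∃ (A A' : Formula) (Δ : Sequent), Deep r A A' ∧ Γ = A ::ₘ Δ ∧ Γ' = A' ::ₘ Δ

/-- Derivability between sequents by a finite sequence of deep rewriting steps. -/
def SeqDeriv (r : Formula → Formula → Prop) : Sequent → Sequent → Prop :=
  Relation.ReflTransGen (SeqStep r)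

/-- Derivability between formulas by a finite sequence of deep rewriting steps. -/
def FormDeriv (r : Formula → Formula → Prop) : Formula → Formula → Prop :=
  Relation.ReflTransGen (Deep r)

/-- Equivalence of formulas modulo associativity and commutativity of ⊗ and ⅋. -/
inductive ACEq : Formula → Formula → Prop
  | refl (A : Formula) : ACEq A A
  | symm {A B : Formula} : ACEq A B → ACEq B A
  | trans {A B C : Formula} : ACEq A B → ACEq B C → ACEq A C
  | tensAssoc (A B C : Formula) :
      ACEq (Formula.tens (Formula.tens A B) C) (Formula.tens A (Formula.tens B C))
  | parrAssoc (A B C : Formula) :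
      ACEq (Formula.parr (Formula.parr A B) C) (Formula.parr A (Formula.parr B C))
  | tensComm (A B : Formula) : ACEq (Formula.tens A B) (Formula.tens B A)
  | parrComm (A B : Formula) : ACEq (Formula.parr A B) (Formula.parr B A)
  | tensCongr {A A' B B' : Formula} :
      ACEq A A' → ACEq B B' → ACEq (Formula.tens A B) (Formula.tens A' B')
  | parrCongr {A A' B B' : Formula} :
      ACEq A A' → ACEq B B' → ACEq (Formula.parr A B) (Formula.parr A' B')
  | bangCongr {A A' : Formula} : ACEq A A' → ACEq (Formula.bang A) (Formula.bang A')
  | questCongr {A A' : Formula} : ACEq A A' → ACEq (Formula.quest A) (Formula.quest A')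

/-! ## Mixed graphs and relation webs -/

/-- A mixed graph: a finite set of vertices from `ℕ`, an undirected edge relation `R`
and a directed edge relation `lt`. -/
structure MGraph where
  verts : Finset ℕ
  R : ℕ → ℕ → Prop
  lt : ℕ → ℕ → Prop

namespace MGraph

/-- The axioms of mixed graphs: `R` symmetric and irreflexive, `lt` irreflexive,
`R ∩ lt = ∅`, and all edges between vertices. -/
def IsMixed (G : MGraph) : Prop :=
  (∀ u v, G.R u v → G.R v u) ∧
  (∀ v, ¬ G.R v v) ∧
  (∀ v, ¬ G.lt v v) ∧
  (∀ u v, ¬ (G.R u v ∧ G.lt u v)) ∧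
  (∀ u v, G.R u v → u ∈ G.verts ∧ v ∈ G.verts) ∧
  (∀ u v, G.lt u v → u ∈ G.verts ∧ v ∈ G.verts)

/-- `u` and `v` are joined by no edge at all. -/
def noEdge (G : MGraph) (u v : ℕ) : Prop :=
  ¬ G.R u v ∧ ¬ G.R v u ∧ ¬ G.lt u v ∧ ¬ G.lt v u

/-- A relation web: a non-empty mixed graph with `lt` transitive, `(V,R)` a cograph
(no induced P₄), `(V,lt)` a series-parallel order (no induced N), and no induced
3-color triangle. -/
def IsRelWeb (G : MGraph) : Prop :=
  G.IsMixed ∧ G.verts.Nonempty ∧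
  (∀ u v w, G.lt u v → G.lt v w → G.lt u w) ∧
  (¬ ∃ w x y z, w ∈ G.verts ∧ x ∈ G.verts ∧ y ∈ G.verts ∧ z ∈ G.verts ∧
      w ≠ x ∧ w ≠ y ∧ w ≠ z ∧ x ≠ y ∧ x ≠ z ∧ y ≠ z ∧
      G.R w x ∧ G.R x y ∧ G.R y z ∧ ¬ G.R w y ∧ ¬ G.R w z ∧ ¬ G.R x z) ∧
  (¬ ∃ u v y z, u ∈ G.verts ∧ v ∈ G.verts ∧ y ∈ G.verts ∧ z ∈ G.verts ∧
      u ≠ v ∧ u ≠ y ∧ u ≠ z ∧ v ≠ y ∧ v ≠ z ∧ y ≠ z ∧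
      G.lt u v ∧ G.lt y v ∧ G.lt y z ∧
      ¬ G.lt u y ∧ ¬ G.lt y u ∧ ¬ G.lt u z ∧ ¬ G.lt z u ∧ ¬ G.lt v z ∧ ¬ G.lt z v) ∧
  (¬ ∃ u w v, u ∈ G.verts ∧ w ∈ G.verts ∧ v ∈ G.verts ∧
      u ≠ w ∧ u ≠ v ∧ w ≠ v ∧
      G.noEdge u w ∧ G.R w v ∧ (G.lt u v ∨ G.lt v u))

/-- `G ⅋ H`: disjoint union. -/
def uparr (G H : MGraph) : MGraph where
  verts := G.verts ∪ H.verts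
  R := fun u v => G.R u v ∨ H.R u v
  lt := fun u v => G.lt u v ∨ H.lt u v

/-- `G ⊗ H`: disjoint union plus all undirected edges between `G` and `H`. -/
def utens (G H : MGraph) : MGraph where
  verts := G.verts ∪ H.verts
  R := fun u v => G.R u v ∨ H.R u v ∨
    (u ∈ G.verts ∧ v ∈ H.verts) ∨ (u ∈ H.verts ∧ v ∈ G.verts)
  lt := fun u v => G.lt u v ∨ H.lt u v

/-- `G ◁ H`: disjoint union plus all directed edges from `G` to `H`. -/
def useq (G H : MGraph) : MGraph where
  verts := G.verts ∪ H.verts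
  R := fun u v => G.R u v ∨ H.R u v
  lt := fun u v => G.lt u v ∨ H.lt u v ∨ (u ∈ G.verts ∧ v ∈ H.verts)

/-- Graphs constructible from single vertices using `⅋`, `◁` and `⊗`
(applied to disjoint graphs). -/
inductive Constructible : MGraph → Prop
  | single (n : ℕ) :
      Constructible ⟨{n}, fun _ _ => False, fun _ _ => False⟩
  | parr {G H : MGraph} : Constructible G → Constructible H →
      Disjoint G.verts H.verts → Constructible (uparr G H)
  | tens {G H : MGraph} : Constructible G → Constructible H →
      Disjoint G.verts H.verts → Constructible (utens G H)
  | seq {G H : MGraph} : Constructible G → Constructible H →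
      Disjoint G.verts H.verts → Constructible (useq G H)

end MGraph

/-! ## Labeled graphs and the translation of formulas -/

/-- Vertex labels: atoms, dual atoms, `!`, `?`, `1`, `⊥`, `∘`. -/
inductive GLabel where
  | atom  : ℕ → GLabel
  | natom : ℕ → GLabel
  | bang  : GLabel
  | quest : GLabel
  | one   : GLabel
  | bot   : GLabel
  | hole  : GLabel
  deriving DecidableEq

/-- Atomic labels (atoms or dual atoms). -/
def GLabel.isAtom : GLabel → Prop
  | .atom _  => True
  | .natom _ => True
  | _        => False

/-- A labeled mixed graph. -/
structure LabGraph extends MGraph where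
  lab : ℕ → GLabel

namespace LabGraph

/-- A labeled graph is a relation web when its underlying mixed graph is. -/
def IsWeb (G : LabGraph) : Prop := G.toMGraph.IsRelWeb

/-- Properly labeled: a vertex has an outgoing `lt`-edge iff its label is `!` or `?`. -/
def ProperlyLabeled (G : LabGraph) : Prop :=
  ∀ v ∈ G.verts, (∃ w, G.lt v w) ↔ (G.lab v = GLabel.bang ∨ G.lab v = GLabel.quest)

/-- Modal: properly labeled, and vertices with `lt`-edges to a common target are
`lt`-comparable. -/
def IsModalLab (G : LabGraph) : Prop :=
  G.ProperlyLabeled ∧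
  ∀ u v w, u ∈ G.verts → v ∈ G.verts → w ∈ G.verts →
    G.lt u w → G.lt v w → u ≠ v → (G.lt u v ∨ G.lt v u)

/-- A (labeled) modal relation web. -/
def IsModalWeb (G : LabGraph) : Prop := G.IsWeb ∧ G.IsModalLab

/-- The single-vertex labeled graph. -/
def point (l : GLabel) : LabGraph where
  verts := {0}
  R := fun _ _ => False
  lt := fun _ _ => False
  lab := fun _ => l

/-- `G ⅋ H` on labeled graphs, with vertices renamed evenly/oddly so as to be disjoint. -/
def gparr (G H : LabGraph) : LabGraph where
  verts := G.verts.image (fun n => 2 * n) ∪ H.verts.image (fun n => 2 * n + 1)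
  R := fun u v =>
    (u % 2 = 0 ∧ v % 2 = 0 ∧ G.R (u / 2) (v / 2)) ∨
    (u % 2 = 1 ∧ v % 2 = 1 ∧ H.R (u / 2) (v / 2))
  lt := fun u v =>
    (u % 2 = 0 ∧ v % 2 = 0 ∧ G.lt (u / 2) (v / 2)) ∨
    (u % 2 = 1 ∧ v % 2 = 1 ∧ H.lt (u / 2) (v / 2))
  lab := fun n => if n % 2 = 0 then G.lab (n / 2) else H.lab (n / 2)

/-- `G ⊗ H` on labeled graphs. -/
def gtens (G H : LabGraph) : LabGraph where
  verts := (gparr G H).verts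
  R := fun u v => (gparr G H).R u v ∨
    (u % 2 = 0 ∧ v % 2 = 1 ∧ u / 2 ∈ G.verts ∧ v / 2 ∈ H.verts) ∨
    (u % 2 = 1 ∧ v % 2 = 0 ∧ u / 2 ∈ H.verts ∧ v / 2 ∈ G.verts)
  lt := (gparr G H).lt
  lab := (gparr G H).lab

/-- `G ◁ H` on labeled graphs. -/
def gseq (G H : LabGraph) : LabGraph where
  verts := (gparr G H).verts
  R := (gparr G H).R
  lt := fun u v => (gparr G H).lt u v ∨
    (u % 2 = 0 ∧ v % 2 = 1 ∧ u / 2 ∈ G.verts ∧ v / 2 ∈ H.verts)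
  lab := (gparr G H).lab

/-- The translation `⟦·⟧` of formulas into labeled graphs. -/
def trans : Formula → LabGraph
  | .atom a  => point (.atom a)
  | .natom a => point (.natom a)
  | .one     => point .one
  | .bot     => point .bot
  | .hole    => point .hole
  | .parr A B => gparr (trans A) (trans B)
  | .tens A B => gtens (trans A) (trans B)
  | .bang A  => gseq (point .bang) (trans A)
  | .quest A => gseq (point .quest) (trans A)

/-- The translation of a sequent (represented as a non-empty list): `⅋` of the members. -/
def transSeq : List Formula → LabGraph
  | [] => point .hole
  | [A] => trans A
  | A :: B :: Γ => gparr (trans A) (transSeq (B :: Γ))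

/-- Isomorphism of labeled mixed graphs. -/
def Iso (G H : LabGraph) : Prop :=
  ∃ f : ℕ → ℕ, Set.BijOn f ↑G.verts ↑H.verts ∧
    (∀ u ∈ G.verts, ∀ v ∈ G.verts,
      (G.R u v ↔ H.R (f u) (f v)) ∧ (G.lt u v ↔ H.lt (f u) (f v))) ∧
    (∀ v ∈ G.verts, H.lab (f v) = G.lab v)

end LabGraph

/-! ## RGB-cographs -/

/-- An RGB-cograph: a labeled graph together with a linking relation. -/
structure RGB extends LabGraph where
  link : ℕ → ℕ → Prop

namespace RGB

/-- The conditions for being an RGB-cograph. -/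
def IsRGB (G : RGB) : Prop :=
  G.toLabGraph.IsModalWeb ∧
  (∀ v ∈ G.verts, G.link v v) ∧
  (∀ u v, G.link u v → G.link v u) ∧
  (∀ u v w, G.link u v → G.link v w → G.link u w) ∧
  (∀ u v, G.link u v → u ∈ G.verts ∧ v ∈ G.verts) ∧
  (∀ v ∈ G.verts, (G.lab v).isAtom →
      ∃! w, w ≠ v ∧ G.link v w ∧ (G.lab w).isAtom) ∧
  (∀ v ∈ G.verts, G.lab v = GLabel.one →
      ∀ w, G.link v w → w ≠ v → G.lab w = GLabel.hole) ∧
  (∀ v ∈ G.verts, G.lab v = GLabel.hole →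
      ∃ w, G.link v w ∧ ((G.lab w).isAtom ∨ G.lab w = GLabel.one)) ∧
  (∀ v ∈ G.verts, (G.lab v = GLabel.bang ∨ G.lab v = GLabel.quest) →
      (∃! w, G.link v w ∧ G.lab w = GLabel.bang) ∧
      (∀ w, G.link v w → G.lab w ≠ GLabel.hole))

/-- Adjacency by an `R`- or `lt`-edge (in either direction). -/
def rlAdj (G : RGB) (u v : ℕ) : Prop :=
  G.R u v ∨ G.R v u ∨ G.lt u v ∨ G.lt v u

/-- Adjacency by a linking edge. -/
def lkAdj (G : RGB) (u v : ℕ) : Prop := G.link u v ∧ u ≠ v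

/-- A single step of an alternating path; `true` = linking edge, `false` = R/lt edge. -/
def aeStep (G : RGB) : Bool → ℕ → ℕ → Prop
  | true,  u, v => G.lkAdj u v
  | false, u, v => G.rlAdj u v

/-- The edges of the list alternate, starting with an edge of kind `b`. -/
def AltChain (G : RGB) : Bool → List ℕ → Prop
  | _, [] => True
  | _, [_] => True
  | b, u :: v :: l => G.aeStep b u v ∧ AltChain G (!b) (v :: l)

/-- An æ-path: a non-empty elementary alternating path on vertices of `G`. -/
def IsAEPath (G : RGB) (l : List ℕ) : Prop :=
  l ≠ [] ∧ l.Nodup ∧ (∀ v ∈ l, v ∈ G.verts) ∧ ∃ b, G.AltChain b l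

/-- A path is chordless if no `R`/`lt` edge joins two non-consecutive vertices. -/
def Chordless (G : RGB) (l : List ℕ) : Prop :=
  ∀ (i j : ℕ) (hi : i < l.length) (hj : j < l.length), i + 2 ≤ j →
    ¬ G.rlAdj (l.get ⟨i, hi⟩) (l.get ⟨j, hj⟩)

/-- æ-connectedness: any two vertices are joined by a chordless æ-path. -/
def AEConnected (G : RGB) : Prop :=
  ∀ u ∈ G.verts, ∀ v ∈ G.verts,
    ∃ l, G.IsAEPath l ∧ G.Chordless l ∧ l.head? = some u ∧ l.getLast? = some v

/-- An æ-cycle, represented by the list of its (distinct) vertices; the closing edge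
returns to the first vertex and the number of edges is even so that alternation closes. -/
def IsAECycle (G : RGB) (l : List ℕ) : Prop :=
  2 ≤ l.length ∧ l.length % 2 = 0 ∧ l.Nodup ∧ (∀ v ∈ l, v ∈ G.verts) ∧
  ∃ b, G.AltChain b (l ++ [l.headI])

/-- Chordlessness for cycles: no `R`/`lt` edge between cyclically non-consecutive
vertices. -/
def ChordlessCyc (G : RGB) (l : List ℕ) : Prop :=
  ∀ (i j : ℕ) (hi : i < l.length) (hj : j < l.length), i + 2 ≤ j →
    ¬ (i = 0 ∧ j = l.length - 1) →
    ¬ G.rlAdj (l.get ⟨i, hi⟩) (l.get ⟨j, hj⟩)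

/-- æ-acyclicity: no chordless æ-cycle. -/
def AEAcyclic (G : RGB) : Prop :=
  ¬ ∃ l, G.IsAECycle l ∧ G.ChordlessCyc l

/-- MELL-correctness of an RGB-cograph. -/
def MELLCorrect (G : RGB) : Prop :=
  G.verts.Nonempty ∧ G.AEConnected ∧ G.AEAcyclic ∧
  (∀ w v v', G.lt w v → G.link v v' → ∃ w', G.link w' w ∧ G.lt w' v')

/-- MLL-correctness: MELL-correct and every vertex is atomic. -/
def MLLCorrect (G : RGB) : Prop :=
  G.MELLCorrect ∧ ∀ v ∈ G.verts, (G.lab v).isAtom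

/-- MLLu-correctness: MELL-correct and every vertex is atomic, `1` or `∘`. -/
def MLLuCorrect (G : RGB) : Prop :=
  G.MELLCorrect ∧
  ∀ v ∈ G.verts, (G.lab v).isAtom ∨ G.lab v = GLabel.one ∨ G.lab v = GLabel.hole

end RGB

/-! ## Fibrations -/

/-- No edge at all between `u` and `v` in the labeled graph `H`. -/
def LabGraph.noE (H : LabGraph) (u v : ℕ) : Prop := H.toMGraph.noEdge u v

/-- A linear fibration between labeled modal relation webs. -/
def IsLinearFib (G H : LabGraph) (f : ℕ → ℕ) : Prop :=
  (∀ v ∈ G.verts, f v ∈ H.verts) ∧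
  -- (1) preservation of R and lt
  (∀ u v, u ∈ G.verts → v ∈ G.verts →
    (G.R u v → H.R (f u) (f v)) ∧ (G.lt u v → H.lt (f u) (f v))) ∧
  -- (2) skew lifting
  (∀ v ∈ G.verts, ∀ w ∈ H.verts,
    (H.R w (f v) → ∃ u ∈ G.verts, G.R u v ∧ H.noE w (f u)) ∧
    (H.lt w (f v) → ∃ u ∈ G.verts, G.lt u v ∧ H.noE w (f u))) ∧
  -- (3) modality
  (∀ u v, u ∈ G.verts → v ∈ G.verts → u ≠ v → G.noE u v → H.lt (f u) (f v) →
    ∃ w ∈ G.verts, (G.lt w v ∧ f w = f u) ∨ (G.lt u w ∧ f w = f v)) ∧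
  -- (4) labels
  (∀ v ∈ G.verts,
    (G.lab v ≠ GLabel.hole → H.lab (f v) = G.lab v) ∧
    (G.lab v = GLabel.hole →
      H.lab (f v) = GLabel.hole ∨ H.lab (f v) = GLabel.bot ∨ H.lab (f v) = GLabel.quest)) ∧
  -- (5) ∘-domination
  (∀ w ∈ H.verts, (∀ v ∈ G.verts, f v ≠ w) →
    ∃ u ∈ G.verts, G.lab u = GLabel.hole ∧ H.lab (f u) = GLabel.quest ∧ H.lt (f u) w ∧
      ∀ v ∈ G.verts, (H.R (f v) (f u) ↔ H.R (f v) w) ∧ (H.lt (f v) (f u) ↔ H.lt (f v) w)) ∧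
  -- (6) ?-domination
  (∀ v₁ v₂, v₁ ∈ G.verts → v₂ ∈ G.verts → v₁ ≠ v₂ → f v₁ = f v₂ →
    ∃ w₁ w₂, w₁ ∈ G.verts ∧ w₂ ∈ G.verts ∧ w₁ ≠ w₂ ∧ f w₁ = f w₂ ∧
      H.lab (f w₁) = GLabel.quest ∧
      ((w₁ = v₁ ∧ w₂ = v₂) ∨ (G.lt w₁ v₁ ∧ G.lt w₂ v₂)))

/-- `v` and `w` are clones: every other vertex relates to them in the same way. -/
def Clones (G : LabGraph) (v w : ℕ) : Prop :=
  ∀ u ∈ G.verts, u ≠ v → u ≠ w →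
    (G.R u v ↔ G.R u w) ∧ (G.lt u v ↔ G.lt u w) ∧ (G.lt v u ↔ G.lt w u) ∧
    (G.noE u v ↔ G.noE u w)

/-- A ?-map between labeled modal relation webs. -/
def IsQMap (G H : LabGraph) (f : ℕ → ℕ) : Prop :=
  (∀ v ∈ G.verts, f v ∈ H.verts) ∧
  (∀ v w, v ∈ G.verts → w ∈ G.verts → v ≠ w → f v = f w →
    Clones G v w ∧ G.lt v w ∧ H.lab (f v) = G.lab w ∧
    (G.lab w = GLabel.quest ∨ G.lab w = GLabel.hole)) ∧
  (∀ v w, v ∈ G.verts → w ∈ G.verts → f v ≠ f w →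
    (G.R v w → H.R (f v) (f w)) ∧ (G.lt v w → H.lt (f v) (f w)) ∧
    (G.lt w v → H.lt (f w) (f v)) ∧ (G.noE v w → H.noE (f v) (f w))) ∧
  (∀ w ∈ H.verts, (∀ v ∈ G.verts, f v ≠ w) →
    H.lab w = GLabel.quest ∧ ∃ x, H.lt w x)

/-- A MELL-fibration: the composite of a ?-map followed by a linear fibration. -/
def IsMELLFib (G H : LabGraph) (f : ℕ → ℕ) : Prop :=
  ∃ (K : LabGraph) (g h : ℕ → ℕ),
    K.IsModalWeb ∧ IsQMap G K g ∧ IsLinearFib K H h ∧ ∀ v ∈ G.verts, f v = h (g v)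

/-- A MLLu-fibration: a MELL-fibration whose codomain has no `!` or `?` vertex. -/
def IsMLLuFib (G H : LabGraph) (f : ℕ → ℕ) : Prop :=
  IsMELLFib G H f ∧
  ∀ v ∈ H.verts, H.lab v ≠ GLabel.bang ∧ H.lab v ≠ GLabel.quest

/-- A MLL-fibration: a bijection whose codomain has no `!`, `?` or `∘` vertex. -/
def IsMLLFib (G H : LabGraph) (f : ℕ → ℕ) : Prop :=
  Set.BijOn f ↑G.verts ↑H.verts ∧
  ∀ v ∈ H.verts,
    H.lab v ≠ GLabel.bang ∧ H.lab v ≠ GLabel.quest ∧ H.lab v ≠ GLabel.hole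

/-- An allegiant map from an RGB-cograph to a labeled relation web. -/
def Allegiant (G : RGB) (H : LabGraph) (f : ℕ → ℕ) : Prop :=
  (∀ v w, v ∈ G.verts → w ∈ G.verts → G.link v w → v ≠ w →
    (G.lab v).isAtom → (G.lab w).isAtom →
    ∃ n : ℕ, (H.lab (f v) = GLabel.atom n ∧ H.lab (f w) = GLabel.natom n) ∨
             (H.lab (f v) = GLabel.natom n ∧ H.lab (f w) = GLabel.atom n)) ∧
  (∀ v ∈ G.verts, G.lab v ≠ GLabel.hole → H.lab (f v) = G.lab v) ∧
  (∀ v ∈ G.verts, G.lab v = GLabel.hole →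
    H.lab (f v) = GLabel.bot ∨ H.lab (f v) = GLabel.quest)

/-! ## Systems, correctness and combinatorial proofs, parametrized by X -/

inductive Sys where
  | MLL | MLLu | MELL

/-- Provability in the sequent system `X`. -/
def SysProv : Sys → Sequent → Prop
  | Sys.MLL  => ProvMLL
  | Sys.MLLu => ProvMLLu
  | Sys.MELL => ProvMELL

/-- Provability in the linear system `X^ℓ`. -/
def SysProvLin : Sys → Sequent → Prop
  | Sys.MLL  => ProvMLL
  | Sys.MLLu => ProvMLLuLin
  | Sys.MELL => ProvMELLLin

/-- The appropriate class of formulas for `X`: MELL-formulas for MELL; formulas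
without modalities for MLLu; formulas without modalities and without `∘` for MLL. -/
def SysForm : Sys → Formula → Prop
  | Sys.MLL  => fun F => F.noMod ∧ F.isMELL
  | Sys.MLLu => Formula.noMod
  | Sys.MELL => Formula.isMELL

/-- `X`-correctness of RGB-cographs. -/
def SysCorrect : Sys → RGB → Prop
  | Sys.MLL  => RGB.MLLCorrect
  | Sys.MLLu => RGB.MLLuCorrect
  | Sys.MELL => RGB.MELLCorrect

/-- `X`-fibrations. -/
def SysFib : Sys → LabGraph → LabGraph → (ℕ → ℕ) → Prop
  | Sys.MLL  => IsMLLFib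
  | Sys.MLLu => IsMLLuFib
  | Sys.MELL => IsMELLFib

/-- An `X`-combinatorial proof with conclusion graph `H`: an allegiant `X`-fibration
from an `X`-correct RGB-cograph. -/
def IsCombProof (X : Sys) (G : RGB) (f : ℕ → ℕ) (H : LabGraph) : Prop :=
  G.IsRGB ∧ SysCorrect X G ∧ Allegiant G H f ∧ SysFib X G.toLabGraph H f


/-!
Associativity and commutativity of `⊗` and `⅋` are realised on translations by explicit
renamings of vertices (transported along `ℕ ≃ ℕ ⊕ ℕ`), so AC-equivalent formulas have
isomorphic translations.

Conversely, call `S` a union of `⅋`-components of a graph if it is closed under adjacency, and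
a union of `⊗`-components if it is closed under non-adjacency in `R`. The translation of a
formula that is not a `⅋` (resp. not a `⊗`) has no proper such union, so by induction every
nonempty proper union of `c`-components of `⟦F⟧` is, up to an AC-equivalence `F ≡ B ∘ C` and
the corresponding isomorphism, exactly the vertex set of `⟦B⟧`. Given `⟦A ∘ B⟧ ≅ ⟦F'⟧`, the
image of `⟦A⟧` is such a union, hence `F' ≡ B' ∘ C'` through an isomorphism matching `⟦A⟧`
with `⟦B'⟧`; restricting it gives `⟦A⟧ ≅ ⟦B'⟧` and `⟦B⟧ ≅ ⟦C'⟧`, and induction concludes.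
A modal formula is recognised by the root of its translation, an atomic one by its single vertex.
-/

inductive MultConn
  | parr
  | tens

namespace Formula

def bin : MultConn → Formula → Formula → Formula
  | .parr => parr
  | .tens => tens

end Formula

namespace ACEq

variable {c : MultConn}

lemma bin_congr {A A' B B' : Formula} (hA : ACEq A A') (hB : ACEq B B') :
    ACEq (.bin c A B) (.bin c A' B') := by
  cases c
  exacts [parrCongr hA hB, tensCongr hA hB]

lemma bin_comm (c : MultConn) (A B : Formula) : ACEq (.bin c A B) (.bin c B A) := by
  cases c
  exacts [parrComm A B, tensComm A B]

lemma bin_assoc (c : MultConn) (A B C : Formula) :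
    ACEq (.bin c (.bin c A B) C) (.bin c A (.bin c B C)) := by
  cases c
  exacts [parrAssoc A B C, tensAssoc A B C]

end ACEq

@[simp] lemma Nat.two_mul_add_one_div_two (n : ℕ) : (2 * n + 1) / 2 = n := by omega

@[simp] lemma Nat.two_mul_add_one_ne_two_mul (m n : ℕ) : 2 * m + 1 ≠ 2 * n := by omega

attribute [simp] Nat.two_mul_ne_two_mul_add_one

namespace LabGraph

open Set Function

variable {G G' H H' K : LabGraph} {a b : ℕ}

/-! ### The binary graph operations at encoded vertices -/

def bin : MultConn → LabGraph → LabGraph → LabGraph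
  | .parr => gparr
  | .tens => gtens

@[simp] lemma trans_bin (c : MultConn) (A B : Formula) :
    trans (.bin c A B) = bin c (trans A) (trans B) := by
  cases c <;> rfl

@[simp] lemma two_mul_mem_gparr : 2 * a ∈ (gparr G H).verts ↔ a ∈ G.verts := by simp [gparr]

@[simp] lemma two_mul_add_one_mem_gparr : 2 * a + 1 ∈ (gparr G H).verts ↔ a ∈ H.verts := by
  simp [gparr]

lemma exists_of_mem_gparr {v : ℕ} (hv : v ∈ (gparr G H).verts) :
    (∃ a ∈ G.verts, v = 2 * a) ∨ ∃ b ∈ H.verts, v = 2 * b + 1 := by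
  obtain ⟨a, rfl | rfl⟩ := Nat.even_or_odd' v <;> simp_all

section bin

variable {c : MultConn}

@[simp] lemma bin_verts (c : MultConn) (G H : LabGraph) :
    (bin c G H).verts = (gparr G H).verts := by
  cases c <;> rfl

@[simp] lemma bin_R_two_mul_two_mul : (bin c G H).R (2 * a) (2 * b) ↔ G.R a b := by
  cases c <;> simp [bin, gparr, gtens]

@[simp] lemma bin_R_two_mul_add_one_two_mul_add_one :
    (bin c G H).R (2 * a + 1) (2 * b + 1) ↔ H.R a b := by
  cases c <;> simp [bin, gparr, gtens]

@[simp] lemma bin_R_two_mul_two_mul_add_one :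
    (bin c G H).R (2 * a) (2 * b + 1) ↔ c = .tens ∧ a ∈ G.verts ∧ b ∈ H.verts := by
  cases c <;> simp [bin, gparr, gtens]

@[simp] lemma bin_R_two_mul_add_one_two_mul :
    (bin c G H).R (2 * a + 1) (2 * b) ↔ c = .tens ∧ a ∈ H.verts ∧ b ∈ G.verts := by
  cases c <;> simp [bin, gparr, gtens]

@[simp] lemma bin_lt_two_mul_two_mul : (bin c G H).lt (2 * a) (2 * b) ↔ G.lt a b := by
  cases c <;> simp [bin, gparr, gtens]

@[simp] lemma bin_lt_two_mul_add_one_two_mul_add_one :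
    (bin c G H).lt (2 * a + 1) (2 * b + 1) ↔ H.lt a b := by
  cases c <;> simp [bin, gparr, gtens]

@[simp] lemma not_bin_lt_two_mul_two_mul_add_one : ¬ (bin c G H).lt (2 * a) (2 * b + 1) := by
  cases c <;> simp [bin, gparr, gtens]

@[simp] lemma not_bin_lt_two_mul_add_one_two_mul : ¬ (bin c G H).lt (2 * a + 1) (2 * b) := by
  cases c <;> simp [bin, gparr, gtens]

@[simp] lemma bin_lab_two_mul : (bin c G H).lab (2 * a) = G.lab a := by
  cases c <;> simp [bin, gparr, gtens]

@[simp] lemma bin_lab_two_mul_add_one : (bin c G H).lab (2 * a + 1) = H.lab a := by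
  cases c <;> simp [bin, gparr, gtens]

lemma exists_of_mem_bin {v : ℕ} (hv : v ∈ (bin c G H).verts) :
    (∃ a ∈ G.verts, v = 2 * a) ∨ ∃ b ∈ H.verts, v = 2 * b + 1 :=
  exists_of_mem_gparr (by simpa using hv)

lemma exists_of_mem_bin_bin {c' : MultConn} {v : ℕ} (hv : v ∈ (bin c (bin c' G H) K).verts) :
    (∃ a ∈ G.verts, v = 2 * (2 * a)) ∨ (∃ a ∈ H.verts, v = 2 * (2 * a + 1)) ∨
      ∃ a ∈ K.verts, v = 2 * a + 1 := by
  rcases exists_of_mem_bin hv with ⟨a, ha, rfl⟩ | h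
  · rcases exists_of_mem_bin ha with ⟨a, ha', rfl⟩ | ⟨a, ha', rfl⟩ <;> simp [ha']
  · exact .inr (.inr h)

end bin

lemma trans_verts_nonempty (F : Formula) : (trans F).verts.Nonempty := by
  induction F with
  | parr A B ihA _ | tens A B ihA _ =>
    obtain ⟨a, ha⟩ := ihA
    exact ⟨2 * a, by simpa [trans, gtens] using ha⟩
  | bang A | quest A => exact ⟨0, by simp [trans, gseq, gparr, point]⟩
  | _ => exact ⟨0, by simp [trans, point]⟩

/-! ### Isomorphisms along a given vertex map -/

structure IsoVia (f : ℕ → ℕ) (G H : LabGraph) : Prop where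
  bijOn : BijOn f G.verts H.verts
  map_R : ∀ u ∈ G.verts, ∀ v ∈ G.verts, H.R (f u) (f v) ↔ G.R u v
  map_lt : ∀ u ∈ G.verts, ∀ v ∈ G.verts, H.lt (f u) (f v) ↔ G.lt u v
  map_lab : ∀ v ∈ G.verts, H.lab (f v) = G.lab v

lemma iso_iff_exists_isoVia : Iso G H ↔ ∃ f, IsoVia f G H :=
  exists_congr fun _ => ⟨fun ⟨hb, he, hl⟩ => ⟨hb, fun u hu v hv => (he u hu v hv).1.symm,
    fun u hu v hv => (he u hu v hv).2.symm, hl⟩,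
    fun h => ⟨h.bijOn, fun u hu v hv => ⟨(h.map_R u hu v hv).symm, (h.map_lt u hu v hv).symm⟩,
      h.map_lab⟩⟩

namespace IsoVia

variable {f g : ℕ → ℕ}

lemma iso (hf : IsoVia f G H) : Iso G H := iso_iff_exists_isoVia.2 ⟨f, hf⟩

lemma map_mem (hf : IsoVia f G H) {v : ℕ} (hv : v ∈ G.verts) : f v ∈ H.verts :=
  hf.bijOn.mapsTo hv

lemma id (G : LabGraph) : IsoVia id G G :=
  ⟨bijOn_id _, fun _ _ _ _ => Iff.rfl, fun _ _ _ _ => Iff.rfl, fun _ _ => rfl⟩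

lemma trans (hf : IsoVia f G H) (hg : IsoVia g H K) : IsoVia (g ∘ f) G K where
  bijOn := hg.bijOn.comp hf.bijOn
  map_R u hu v hv := (hg.map_R _ (hf.map_mem hu) _ (hf.map_mem hv)).trans (hf.map_R u hu v hv)
  map_lt u hu v hv := (hg.map_lt _ (hf.map_mem hu) _ (hf.map_mem hv)).trans (hf.map_lt u hu v hv)
  map_lab v hv := (hg.map_lab _ (hf.map_mem hv)).trans (hf.map_lab v hv)

lemma symm (hf : IsoVia f G H) : IsoVia (invFunOn f G.verts) H G := by
  have hinv := hf.bijOn.invOn_invFunOn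
  have hmaps : MapsTo (invFunOn f G.verts) H.verts G.verts := (hf.bijOn.symm hinv.symm).mapsTo
  refine ⟨hf.bijOn.symm hinv.symm, fun u hu v hv => ?_, fun u hu v hv => ?_, fun v hv => ?_⟩
  · rw [← hf.map_R _ (hmaps hu) _ (hmaps hv), hinv.2 hu, hinv.2 hv]
  · rw [← hf.map_lt _ (hmaps hu) _ (hmaps hv), hinv.2 hu, hinv.2 hv]
  · rw [← hf.map_lab _ (hmaps hv), hinv.2 hv]

end IsoVia

namespace Iso

lemma refl (G : LabGraph) : Iso G G := (IsoVia.id G).iso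

lemma symm (h : Iso G H) : Iso H G :=
  let ⟨_, hf⟩ := iso_iff_exists_isoVia.1 h
  hf.symm.iso

lemma trans (h : Iso G H) (h' : Iso H K) : Iso G K :=
  let ⟨_, hf⟩ := iso_iff_exists_isoVia.1 h
  let ⟨_, hg⟩ := iso_iff_exists_isoVia.1 h'
  (hf.trans hg).iso

lemma card_verts_eq (h : Iso G H) : G.verts.card = H.verts.card :=
  let ⟨_, hf⟩ := iso_iff_exists_isoVia.1 h
  hf.bijOn.finsetCard_eq

end Iso

def pairMap (f g : ℕ → ℕ) (v : ℕ) : ℕ := if v % 2 = 0 then 2 * f (v / 2) else 2 * g (v / 2) + 1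

@[simp] lemma pairMap_two_mul (f g : ℕ → ℕ) (a : ℕ) : pairMap f g (2 * a) = 2 * f a := by
  simp [pairMap]

@[simp] lemma pairMap_two_mul_add_one (f g : ℕ → ℕ) (a : ℕ) :
    pairMap f g (2 * a + 1) = 2 * g a + 1 := by
  simp [pairMap]

lemma bijOn_pairMap {f g : ℕ → ℕ} (hf : BijOn f G.verts G'.verts) (hg : BijOn g H.verts H'.verts) :
    BijOn (pairMap f g) (gparr G H).verts (gparr G' H').verts := by
  refine ⟨fun v hv => ?_, fun u hu v hv huv => ?_, fun w hw => ?_⟩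
  · rcases exists_of_mem_gparr hv with ⟨a, ha, rfl⟩ | ⟨b, hb, rfl⟩
    · simpa using hf.mapsTo ha
    · simpa using hg.mapsTo hb
  · rcases exists_of_mem_gparr hu with ⟨a, ha, rfl⟩ | ⟨a, ha, rfl⟩ <;>
      rcases exists_of_mem_gparr hv with ⟨b, hb, rfl⟩ | ⟨b, hb, rfl⟩ <;>
      simp at huv
    · rw [hf.injOn ha hb huv]
    · rw [hg.injOn ha hb huv]
  · rcases exists_of_mem_gparr hw with ⟨a, ha, rfl⟩ | ⟨b, hb, rfl⟩
    · obtain ⟨x, hx, rfl⟩ := hf.surjOn ha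
      exact ⟨2 * x, by simpa using hx, by simp⟩
    · obtain ⟨x, hx, rfl⟩ := hg.surjOn hb
      exact ⟨2 * x + 1, by simpa using hx, by simp⟩

lemma IsoVia.bin_congr {f g : ℕ → ℕ} (c : MultConn) (hf : IsoVia f G G') (hg : IsoVia g H H') :
    IsoVia (pairMap f g) (bin c G H) (bin c G' H') := by
  refine ⟨by simpa using bijOn_pairMap hf.bijOn hg.bijOn,
    fun u hu v hv => ?_, fun u hu v hv => ?_, fun v hv => ?_⟩
  · rcases exists_of_mem_bin hu with ⟨a, ha, rfl⟩ | ⟨a, ha, rfl⟩ <;>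
      rcases exists_of_mem_bin hv with ⟨b, hb, rfl⟩ | ⟨b, hb, rfl⟩ <;>
      simp [hf.map_R, hg.map_R, hf.map_mem, hg.map_mem, *]
  · rcases exists_of_mem_bin hu with ⟨a, ha, rfl⟩ | ⟨a, ha, rfl⟩ <;>
      rcases exists_of_mem_bin hv with ⟨b, hb, rfl⟩ | ⟨b, hb, rfl⟩ <;>
      simp [hf.map_lt, hg.map_lt, *]
  · rcases exists_of_mem_bin hv with ⟨a, ha, rfl⟩ | ⟨a, ha, rfl⟩ <;>
      simp [hf.map_lab, hg.map_lab, *]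

lemma IsoVia.gseq_congr {f g : ℕ → ℕ} (hf : IsoVia f G G') (hg : IsoVia g H H') :
    IsoVia (pairMap f g) (gseq G H) (gseq G' H') := by
  refine ⟨bijOn_pairMap hf.bijOn hg.bijOn, fun u hu v hv => ?_, fun u hu v hv => ?_,
    fun v hv => ?_⟩
  · rcases exists_of_mem_gparr hu with ⟨a, ha, rfl⟩ | ⟨a, ha, rfl⟩ <;>
      rcases exists_of_mem_gparr hv with ⟨b, hb, rfl⟩ | ⟨b, hb, rfl⟩ <;>
      simp [LabGraph.gseq, gparr, hf.map_R, hg.map_R, *]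
  · rcases exists_of_mem_gparr hu with ⟨a, ha, rfl⟩ | ⟨a, ha, rfl⟩ <;>
      rcases exists_of_mem_gparr hv with ⟨b, hb, rfl⟩ | ⟨b, hb, rfl⟩ <;>
      simp [LabGraph.gseq, gparr, hf.map_lt, hg.map_lt, hf.map_mem, hg.map_mem, *]
  · rcases exists_of_mem_gparr hv with ⟨a, ha, rfl⟩ | ⟨a, ha, rfl⟩ <;>
      simp [LabGraph.gseq, gparr, hf.map_lab, hg.map_lab, *]

/-! ### Isomorphisms respecting a marked vertex set -/

def pairSet (X Y : Set ℕ) : Set ℕ := (2 * ·) '' X ∪ (2 * · + 1) '' Y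

@[simp] lemma two_mul_mem_pairSet {X Y : Set ℕ} : 2 * a ∈ pairSet X Y ↔ a ∈ X := by
  simp [pairSet]

@[simp] lemma two_mul_add_one_mem_pairSet {X Y : Set ℕ} : 2 * a + 1 ∈ pairSet X Y ↔ a ∈ Y := by
  simp [pairSet]

@[simp] lemma pairSet_empty_empty : pairSet ∅ ∅ = ∅ := by simp [pairSet]

@[simp] lemma pairSet_univ_univ : pairSet univ univ = univ := by
  ext v
  obtain ⟨a, rfl | rfl⟩ := Nat.even_or_odd' v <;> simp

lemma pairSet_univ_empty : pairSet univ ∅ = range (2 * ·) := by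
  ext v
  obtain ⟨a, rfl | rfl⟩ := Nat.even_or_odd' v <;> simp

lemma compl_pairSet_univ_empty : (pairSet univ ∅)ᶜ = range (2 * · + 1) := by
  ext v
  obtain ⟨a, rfl | rfl⟩ := Nat.even_or_odd' v <;> simp

structure MarkedIso (f : ℕ → ℕ) (G : LabGraph) (S : Set ℕ) (H : LabGraph) (T : Set ℕ) : Prop
    extends IsoVia f G H where
  mem_iff : ∀ v ∈ G.verts, f v ∈ T ↔ v ∈ S

namespace MarkedIso

variable {f g : ℕ → ℕ} {S T U X Y X' Y' : Set ℕ}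

lemma trans (hf : MarkedIso f G S H T) (hg : MarkedIso g H T K U) : MarkedIso (g ∘ f) G S K U :=
  ⟨hf.toIsoVia.trans hg.toIsoVia,
    fun v hv => (hg.mem_iff _ (hf.map_mem hv)).trans (hf.mem_iff v hv)⟩

lemma symm (hf : MarkedIso f G S H T) : MarkedIso (invFunOn f G.verts) H T G S := by
  refine ⟨hf.toIsoVia.symm, fun v hv => ?_⟩
  rw [← hf.mem_iff _ (hf.toIsoVia.symm.map_mem hv), hf.bijOn.invOn_invFunOn.2 hv]

lemma id_of_forall (h : ∀ v ∈ G.verts, v ∈ T ↔ v ∈ S) : MarkedIso id G S G T :=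
  ⟨IsoVia.id G, h⟩

lemma compl (hf : MarkedIso f G S H T) : MarkedIso f G Sᶜ H Tᶜ :=
  ⟨hf.toIsoVia, fun v hv => not_congr (hf.mem_iff v hv)⟩

lemma bin_congr (c : MultConn) (hf : MarkedIso f G X G' X') (hg : MarkedIso g H Y H' Y') :
    MarkedIso (pairMap f g) (bin c G H) (pairSet X Y) (bin c G' H') (pairSet X' Y') := by
  refine ⟨hf.toIsoVia.bin_congr c hg.toIsoVia, fun v hv => ?_⟩
  rcases exists_of_mem_bin hv with ⟨a, ha, rfl⟩ | ⟨a, ha, rfl⟩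
  · simpa using hf.mem_iff a ha
  · simpa using hg.mem_iff a ha

end MarkedIso

open Equiv in
def swapHalves : ℕ ≃ ℕ := natSumNatEquivNat.symm.trans ((sumComm ℕ ℕ).trans natSumNatEquivNat)

open Equiv in
def assocHalves : ℕ ≃ ℕ :=
  natSumNatEquivNat.symm.trans <| (sumCongr natSumNatEquivNat.symm (.refl ℕ)).trans <|
    (sumAssoc ℕ ℕ ℕ).trans <| (sumCongr (.refl ℕ) natSumNatEquivNat).trans natSumNatEquivNat

@[simp] lemma swapHalves_two_mul (a : ℕ) : swapHalves (2 * a) = 2 * a + 1 := by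
  simp [swapHalves]

@[simp] lemma swapHalves_two_mul_add_one (a : ℕ) : swapHalves (2 * a + 1) = 2 * a := by
  simp [swapHalves]

@[simp] lemma assocHalves_two_mul_two_mul (a : ℕ) : assocHalves (2 * (2 * a)) = 2 * a := by
  simp [assocHalves]

@[simp] lemma assocHalves_two_mul_two_mul_add_one (a : ℕ) :
    assocHalves (2 * (2 * a + 1)) = 2 * (2 * a) + 1 := by
  simp [assocHalves]

@[simp] lemma assocHalves_two_mul_add_one (a : ℕ) :
    assocHalves (2 * a + 1) = 2 * (2 * a + 1) + 1 := by
  simp [assocHalves]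

lemma markedIso_swapHalves (c : MultConn) (G H : LabGraph) (X Y : Set ℕ) :
    MarkedIso swapHalves (bin c G H) (pairSet X Y) (bin c H G) (pairSet Y X) := by
  have hverts (v : ℕ) : swapHalves v ∈ (bin c H G).verts ↔ v ∈ (bin c G H).verts := by
    obtain ⟨a, rfl | rfl⟩ := Nat.even_or_odd' v <;> simp
  refine ⟨⟨swapHalves.bijOn hverts, fun u hu v hv => ?_, fun u hu v hv => ?_, fun v hv => ?_⟩,
    fun v hv => ?_⟩
  · rcases exists_of_mem_bin hu with ⟨a, ha, rfl⟩ | ⟨a, ha, rfl⟩ <;>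
      rcases exists_of_mem_bin hv with ⟨b, hb, rfl⟩ | ⟨b, hb, rfl⟩ <;> simp [*]
  · rcases exists_of_mem_bin hu with ⟨a, ha, rfl⟩ | ⟨a, ha, rfl⟩ <;>
      rcases exists_of_mem_bin hv with ⟨b, hb, rfl⟩ | ⟨b, hb, rfl⟩ <;> simp
  · rcases exists_of_mem_bin hv with ⟨a, ha, rfl⟩ | ⟨a, ha, rfl⟩ <;> simp
  · rcases exists_of_mem_bin hv with ⟨a, ha, rfl⟩ | ⟨a, ha, rfl⟩ <;> simp

lemma markedIso_assocHalves (c : MultConn) (G H K : LabGraph) (X Y Z : Set ℕ) :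
    MarkedIso assocHalves (bin c (bin c G H) K) (pairSet (pairSet X Y) Z)
      (bin c G (bin c H K)) (pairSet X (pairSet Y Z)) := by
  have hverts (v : ℕ) :
      assocHalves v ∈ (bin c G (bin c H K)).verts ↔ v ∈ (bin c (bin c G H) K).verts := by
    obtain ⟨a, rfl | rfl⟩ := Nat.even_or_odd' v
    · obtain ⟨a, rfl | rfl⟩ := Nat.even_or_odd' a <;> simp
    · simp
  refine ⟨⟨assocHalves.bijOn hverts, fun u hu v hv => ?_, fun u hu v hv => ?_, fun v hv => ?_⟩,
    fun v hv => ?_⟩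
  · rcases exists_of_mem_bin_bin hu with ⟨a, ha, rfl⟩ | ⟨a, ha, rfl⟩ | ⟨a, ha, rfl⟩ <;>
      rcases exists_of_mem_bin_bin hv with ⟨b, hb, rfl⟩ | ⟨b, hb, rfl⟩ | ⟨b, hb, rfl⟩ <;>
      simp [*]
  · rcases exists_of_mem_bin_bin hu with ⟨a, ha, rfl⟩ | ⟨a, ha, rfl⟩ | ⟨a, ha, rfl⟩ <;>
      rcases exists_of_mem_bin_bin hv with ⟨b, hb, rfl⟩ | ⟨b, hb, rfl⟩ | ⟨b, hb, rfl⟩ <;> simp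
  · rcases exists_of_mem_bin_bin hv with ⟨a, ha, rfl⟩ | ⟨a, ha, rfl⟩ | ⟨a, ha, rfl⟩ <;> simp
  · rcases exists_of_mem_bin_bin hv with ⟨a, ha, rfl⟩ | ⟨a, ha, rfl⟩ | ⟨a, ha, rfl⟩ <;> simp

lemma Iso.bin_congr (c : MultConn) (h : Iso G G') (h' : Iso H H') :
    Iso (bin c G H) (bin c G' H') :=
  let ⟨_, hf⟩ := iso_iff_exists_isoVia.1 h
  let ⟨_, hg⟩ := iso_iff_exists_isoVia.1 h'
  (hf.bin_congr c hg).iso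

lemma Iso.gseq_congr (h : Iso G G') (h' : Iso H H') : Iso (gseq G H) (gseq G' H') :=
  let ⟨_, hf⟩ := iso_iff_exists_isoVia.1 h
  let ⟨_, hg⟩ := iso_iff_exists_isoVia.1 h'
  (hf.gseq_congr hg).iso

theorem iso_trans_of_aceq {F F' : Formula} (h : ACEq F F') : Iso (trans F) (trans F') := by
  induction h with
  | refl A => exact .refl _
  | symm _ ih => exact ih.symm
  | trans _ _ ih ih' => exact ih.trans ih'
  | tensAssoc A B C => exact (markedIso_assocHalves .tens _ _ _ ∅ ∅ ∅).iso
  | parrAssoc A B C => exact (markedIso_assocHalves .parr _ _ _ ∅ ∅ ∅).iso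
  | tensComm A B => exact (markedIso_swapHalves .tens _ _ ∅ ∅).iso
  | parrComm A B => exact (markedIso_swapHalves .parr _ _ ∅ ∅).iso
  | tensCongr _ _ ih ih' => exact ih.bin_congr .tens ih'
  | parrCongr _ _ ih ih' => exact ih.bin_congr .parr ih'
  | bangCongr _ ih | questCongr _ ih => exact (Iso.refl _).gseq_congr ih

/-! ### Restricting an isomorphism to an induced subgraph -/

structure IsInducedVia (e : ℕ → ℕ) (G K : LabGraph) : Prop where
  injective : Injective e
  mem_iff : ∀ a, e a ∈ K.verts ↔ a ∈ G.verts
  R_iff : ∀ a b, K.R (e a) (e b) ↔ G.R a b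
  lt_iff : ∀ a b, K.lt (e a) (e b) ↔ G.lt a b
  lab_eq : ∀ a, K.lab (e a) = G.lab a

lemma isInducedVia_bin_left (c : MultConn) (G H : LabGraph) : IsInducedVia (2 * ·) G (bin c G H) :=
  ⟨fun _ _ h => by simpa using h, by simp, by simp, by simp, by simp⟩

lemma isInducedVia_bin_right (c : MultConn) (G H : LabGraph) :
    IsInducedVia (2 * · + 1) H (bin c G H) :=
  ⟨fun _ _ h => by simpa using h, by simp, by simp, by simp, by simp⟩

lemma isInducedVia_gseq_right (G H : LabGraph) : IsInducedVia (2 * · + 1) H (gseq G H) :=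
  ⟨fun _ _ h => by simpa using h, by simp [gseq], by simp [gseq, gparr], by simp [gseq, gparr],
    by simp [gseq, gparr]⟩

lemma MarkedIso.iso_of_isInducedVia {f e e' : ℕ → ℕ} {K K' : LabGraph}
    (hf : MarkedIso f K (range e) K' (range e')) (hG : IsInducedVia e G K)
    (hG' : IsInducedVia e' G' K') : Iso G G' := by
  set g := fun a => invFun e' (f (e a))
  have hg (a : ℕ) (ha : a ∈ G.verts) : e' (g a) = f (e a) :=
    invFun_eq ((hf.mem_iff _ ((hG.mem_iff a).2 ha)).2 ⟨a, rfl⟩)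
  have hmem (a : ℕ) (ha : a ∈ G.verts) : e a ∈ K.verts := (hG.mem_iff a).2 ha
  refine IsoVia.iso (f := g) ⟨⟨fun a ha => ?_, fun a ha b hb hab => ?_, fun b hb => ?_⟩,
    fun a ha b hb => ?_, fun a ha b hb => ?_, fun a ha => ?_⟩
  · rw [Finset.mem_coe, ← hG'.mem_iff, hg a ha]
    exact hf.map_mem (hmem a ha)
  · have := congrArg e' hab
    rw [hg a ha, hg b hb] at this
    exact hG.injective (hf.bijOn.injOn (hmem a ha) (hmem b hb) this)
  · obtain ⟨w, hw, hwb⟩ := hf.bijOn.surjOn ((hG'.mem_iff b).2 hb)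
    obtain ⟨a, rfl⟩ := (hf.mem_iff w hw).1 (hwb ▸ ⟨b, rfl⟩)
    exact ⟨a, (hG.mem_iff a).1 hw, hG'.injective (by rw [hg a ((hG.mem_iff a).1 hw), hwb])⟩
  · rw [← hG'.R_iff, hg a ha, hg b hb, hf.map_R _ (hmem a ha) _ (hmem b hb), hG.R_iff]
  · rw [← hG'.lt_iff, hg a ha, hg b hb, hf.map_lt _ (hmem a ha) _ (hmem b hb), hG.lt_iff]
  · rw [← hG'.lab_eq, hg a ha, hf.map_lab _ (hmem a ha), hG.lab_eq]

lemma MarkedIso.iso_of_bin {f : ℕ → ℕ} {c : MultConn}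
    (hf : MarkedIso f (bin c G H) (pairSet univ ∅) (bin c G' H') (pairSet univ ∅)) :
    Iso G G' ∧ Iso H H' := by
  refine ⟨?_, ?_⟩
  · rw [pairSet_univ_empty] at hf
    exact hf.iso_of_isInducedVia (isInducedVia_bin_left c G H) (isInducedVia_bin_left c G' H')
  · have hf' := hf.compl
    rw [compl_pairSet_univ_empty] at hf'
    exact hf'.iso_of_isInducedVia (isInducedVia_bin_right c G H) (isInducedVia_bin_right c G' H')

/-! ### Unions of components -/

def Adj (G : LabGraph) : MultConn → ℕ → ℕ → Prop
  | .parr, u, v => G.R u v ∨ G.R v u ∨ G.lt u v ∨ G.lt v u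
  | .tens, u, v => ¬ G.R u v ∧ ¬ G.R v u

def IsAdjClosed (G : LabGraph) (c : MultConn) (S : Set ℕ) : Prop :=
  ∀ u ∈ G.verts, ∀ v ∈ G.verts, u ∈ S → G.Adj c u v → v ∈ S

def IsAdjConnected (G : LabGraph) (c : MultConn) : Prop :=
  ∀ S, G.IsAdjClosed c S → (∀ v ∈ G.verts, v ∉ S) ∨ ∀ v ∈ G.verts, v ∈ S

section Adj

variable {c c' : MultConn} {u v : ℕ}

lemma adj_comm : G.Adj c u v ↔ G.Adj c v u := by
  cases c <;> simp only [Adj] <;> tauto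

lemma IsoVia.adj_iff {f : ℕ → ℕ} (hf : IsoVia f G H) (hu : u ∈ G.verts) (hv : v ∈ G.verts) :
    H.Adj c (f u) (f v) ↔ G.Adj c u v := by
  cases c <;> simp [Adj, hf.map_R, hf.map_lt, *]

@[simp] lemma adj_bin_two_mul_two_mul : (bin c' G H).Adj c (2 * a) (2 * b) ↔ G.Adj c a b := by
  cases c <;> simp [Adj]

@[simp] lemma adj_bin_two_mul_add_one_two_mul_add_one :
    (bin c' G H).Adj c (2 * a + 1) (2 * b + 1) ↔ H.Adj c a b := by
  cases c <;> simp [Adj]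

lemma adj_bin_two_mul_two_mul_add_one (ha : a ∈ G.verts) (hb : b ∈ H.verts) :
    (bin c' G H).Adj c (2 * a) (2 * b + 1) ↔ c ≠ c' := by
  cases c <;> cases c' <;> simp [Adj, *]

lemma adj_gseq_two_mul_two_mul_add_one (ha : a ∈ G.verts) (hb : b ∈ H.verts) :
    (gseq G H).Adj c (2 * a) (2 * b + 1) := by
  cases c <;> simp [Adj, gseq, gparr, *]

lemma MarkedIso.isAdjClosed {f : ℕ → ℕ} {S T : Set ℕ} (hf : MarkedIso f G S H T)
    (hT : H.IsAdjClosed c T) : G.IsAdjClosed c S := fun u hu v hv huS huv =>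
  (hf.mem_iff v hv).1 <| hT _ (hf.map_mem hu) _ (hf.map_mem hv) ((hf.mem_iff u hu).2 huS)
    ((hf.adj_iff hu hv).2 huv)

lemma isAdjClosed_bin_pairSet_univ_empty : (bin c G H).IsAdjClosed c (pairSet univ ∅) := by
  intro u hu v hv huS huv
  rcases exists_of_mem_bin hu with ⟨a, ha, rfl⟩ | ⟨a, ha, rfl⟩
  · rcases exists_of_mem_bin hv with ⟨b, hb, rfl⟩ | ⟨b, hb, rfl⟩
    · simp
    · exact absurd rfl ((adj_bin_two_mul_two_mul_add_one ha hb).1 huv)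
  · simp at huS

lemma isAdjConnected_of_forall_adj (hK : K.verts = (gparr G H).verts) (hG : G.verts.Nonempty)
    (hH : H.verts.Nonempty) (hadj : ∀ a ∈ G.verts, ∀ b ∈ H.verts, K.Adj c (2 * a) (2 * b + 1)) :
    K.IsAdjConnected c := by
  intro S hS
  have hmemG {a : ℕ} (ha : a ∈ G.verts) : 2 * a ∈ K.verts := by simpa [hK]
  have hmemH {b : ℕ} (hb : b ∈ H.verts) : 2 * b + 1 ∈ K.verts := by simpa [hK]
  have odd_of_even {a : ℕ} (ha : a ∈ G.verts) (h : 2 * a ∈ S) (b : ℕ) (hb : b ∈ H.verts) :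
      2 * b + 1 ∈ S :=
    hS _ (hmemG ha) _ (hmemH hb) h (hadj a ha b hb)
  have even_of_odd {b : ℕ} (hb : b ∈ H.verts) (h : 2 * b + 1 ∈ S) (a : ℕ) (ha : a ∈ G.verts) :
      2 * a ∈ S :=
    hS _ (hmemH hb) _ (hmemG ha) h (adj_comm.1 (hadj a ha b hb))
  by_cases h : ∃ u ∈ K.verts, u ∈ S
  swap
  · exact .inl fun v hv hvS => h ⟨v, hv, hvS⟩
  obtain ⟨u, hu, huS⟩ := h
  obtain ⟨a₀, ha₀⟩ := hG
  obtain ⟨b₀, hb₀⟩ := hH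
  have hall : (∀ a ∈ G.verts, 2 * a ∈ S) ∧ ∀ b ∈ H.verts, 2 * b + 1 ∈ S := by
    rw [hK] at hu
    rcases exists_of_mem_gparr hu with ⟨a, ha, rfl⟩ | ⟨b, hb, rfl⟩
    · exact ⟨even_of_odd hb₀ (odd_of_even ha huS b₀ hb₀), odd_of_even ha huS⟩
    · exact ⟨even_of_odd hb huS, odd_of_even ha₀ (even_of_odd hb huS a₀ ha₀)⟩
  refine .inr fun v hv => ?_
  rw [hK] at hv
  rcases exists_of_mem_gparr hv with ⟨a, ha, rfl⟩ | ⟨b, hb, rfl⟩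
  exacts [hall.1 a ha, hall.2 b hb]

lemma isAdjConnected_point (l : GLabel) : (point l).IsAdjConnected c := by
  intro S _
  by_cases h : 0 ∈ S <;> simp [point, h]

lemma isAdjConnected_trans {F : Formula} (hF : ∀ A B, F ≠ .bin c A B) :
    (trans F).IsAdjConnected c := by
  cases F with
  | parr A B =>
    exact isAdjConnected_of_forall_adj rfl (trans_verts_nonempty A) (trans_verts_nonempty B)
      fun a ha b hb => (adj_bin_two_mul_two_mul_add_one (c' := .parr) ha hb).2 fun h =>
        hF A B (by rw [h]; rfl)
  | tens A B =>
    exact isAdjConnected_of_forall_adj rfl (trans_verts_nonempty A) (trans_verts_nonempty B)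
      fun a ha b hb => (adj_bin_two_mul_two_mul_add_one (c' := .tens) ha hb).2 fun h =>
        hF A B (by rw [h]; rfl)
  | bang A | quest A =>
    exact isAdjConnected_of_forall_adj rfl ⟨0, by simp [point]⟩ (trans_verts_nonempty A)
      fun a ha b hb => adj_gseq_two_mul_two_mul_add_one ha hb
  | _ => exact isAdjConnected_point _

end Adj

/-! ### Splitting a formula along a union of components -/

def MarkedEquiv (F : Formula) (S : Set ℕ) (F' : Formula) (S' : Set ℕ) : Prop :=
  ACEq F F' ∧ ∃ f, MarkedIso f (trans F) S (trans F') S'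

namespace MarkedEquiv

variable {F F' F'' A A' B B' : Formula} {S S' S'' X X' Y Y' : Set ℕ}

lemma trans (h : MarkedEquiv F S F' S') (h' : MarkedEquiv F' S' F'' S'') :
    MarkedEquiv F S F'' S'' :=
  ⟨h.1.trans h'.1, let ⟨_, hf⟩ := h.2; let ⟨_, hg⟩ := h'.2; ⟨_, hf.trans hg⟩⟩

lemma symm (h : MarkedEquiv F S F' S') : MarkedEquiv F' S' F S :=
  ⟨h.1.symm, let ⟨_, hf⟩ := h.2; ⟨_, hf.symm⟩⟩

lemma of_forall_mem_iff (h : ∀ v ∈ (LabGraph.trans F).verts, v ∈ S' ↔ v ∈ S) :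
    MarkedEquiv F S F S' :=
  ⟨.refl F, _, .id_of_forall h⟩

lemma refl (F : Formula) (S : Set ℕ) : MarkedEquiv F S F S :=
  of_forall_mem_iff fun _ _ => Iff.rfl

lemma bin_congr (c : MultConn) (hA : MarkedEquiv A X A' X') (hB : MarkedEquiv B Y B' Y') :
    MarkedEquiv (.bin c A B) (pairSet X Y) (.bin c A' B') (pairSet X' Y') := by
  obtain ⟨hA, f, hf⟩ := hA
  obtain ⟨hB, g, hg⟩ := hB
  exact ⟨hA.bin_congr hB, _, by simpa using hf.bin_congr c hg⟩

lemma bin_comm (c : MultConn) (A B : Formula) (X Y : Set ℕ) :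
    MarkedEquiv (.bin c A B) (pairSet X Y) (.bin c B A) (pairSet Y X) :=
  ⟨.bin_comm c A B, _, by simpa using markedIso_swapHalves c _ _ X Y⟩

lemma bin_assoc (c : MultConn) (A B C : Formula) (X Y Z : Set ℕ) :
    MarkedEquiv (.bin c (.bin c A B) C) (pairSet (pairSet X Y) Z)
      (.bin c A (.bin c B C)) (pairSet X (pairSet Y Z)) :=
  ⟨.bin_assoc c A B C, _, by simpa using markedIso_assocHalves c _ _ _ X Y Z⟩

lemma bin_bin_bin_comm (c : MultConn) (A B C D : Formula) (X Y Z W : Set ℕ) :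
    MarkedEquiv (.bin c (.bin c A B) (.bin c C D)) (pairSet (pairSet X Y) (pairSet Z W))
      (.bin c (.bin c A C) (.bin c B D)) (pairSet (pairSet X Z) (pairSet Y W)) :=
  (bin_assoc c A B _ X Y _).trans <|
    ((refl A X).bin_congr c <| (bin_assoc c B C D Y Z W).symm.trans <|
      ((bin_comm c B C Y Z).bin_congr c (refl D W)).trans (bin_assoc c C B D Z Y W)).trans
    (bin_assoc c A C _ X Z _).symm

end MarkedEquiv

def SplitsAt (c : MultConn) (F : Formula) (S : Set ℕ) : Prop :=
  MarkedEquiv F S F ∅ ∨ MarkedEquiv F S F univ ∨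
    ∃ B C, MarkedEquiv F S (.bin c B C) (pairSet univ ∅)

lemma splitsAt_of_isAdjConnected {c : MultConn} {F : Formula} {S : Set ℕ}
    (hF : (trans F).IsAdjConnected c) (hS : (trans F).IsAdjClosed c S) : SplitsAt c F S := by
  rcases hF S hS with h | h
  · exact .inl (.of_forall_mem_iff fun v hv => by simp [h v hv])
  · exact .inr (.inl (.of_forall_mem_iff fun v hv => by simp [h v hv]))

lemma splitsAt_bin {c : MultConn} {A B : Formula}
    (hA : ∀ {S}, (trans A).IsAdjClosed c S → SplitsAt c A S)
    (hB : ∀ {S}, (trans B).IsAdjClosed c S → SplitsAt c B S) {S : Set ℕ}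
    (hS : (trans (.bin c A B)).IsAdjClosed c S) : SplitsAt c (.bin c A B) S := by
  set SA := {a | 2 * a ∈ S}
  set SB := {b | 2 * b + 1 ∈ S}
  have hSA : (trans A).IsAdjClosed c SA := fun u hu v hv huS huv =>
    hS (2 * u) (by simpa) (2 * v) (by simpa) huS (by simpa)
  have hSB : (trans B).IsAdjClosed c SB := fun u hu v hv huS huv =>
    hS (2 * u + 1) (by simpa) (2 * v + 1) (by simpa) huS (by simpa)
  have hSAB : S = pairSet SA SB := by
    ext v
    obtain ⟨a, rfl | rfl⟩ := Nat.even_or_odd' v <;> simp [SA, SB]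
  rw [hSAB]
  rcases hA hSA with hA | hA | ⟨A₁, A₂, hA⟩ <;>
    rcases hB hSB with hB | hB | ⟨B₁, B₂, hB⟩ <;>
    have h := hA.bin_congr c hB
  · exact .inl (by simpa using h)
  · exact .inr (.inr ⟨B, A, h.trans (.bin_comm c A B ∅ univ)⟩)
  · refine .inr (.inr ⟨B₁, .bin c B₂ A, ?_⟩)
    simpa using (h.trans (.bin_comm c A _ ∅ _)).trans (.bin_assoc c B₁ B₂ A univ ∅ ∅)
  · exact .inr (.inr ⟨A, B, h⟩)
  · exact .inr (.inl (by simpa using h))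
  · refine .inr (.inr ⟨.bin c A B₁, B₂, ?_⟩)
    simpa using h.trans (.symm (.bin_assoc c A B₁ B₂ univ univ ∅))
  · refine .inr (.inr ⟨A₁, .bin c A₂ B, ?_⟩)
    simpa using h.trans (.bin_assoc c A₁ A₂ B univ ∅ ∅)
  · refine .inr (.inr ⟨.bin c B A₁, A₂, ?_⟩)
    simpa using (h.trans (.bin_comm c _ B _ univ)).trans (.symm (.bin_assoc c B A₁ A₂ univ univ ∅))
  · refine .inr (.inr ⟨.bin c A₁ B₁, .bin c A₂ B₂, ?_⟩)
    simpa using h.trans (.bin_bin_bin_comm c A₁ A₂ B₁ B₂ univ ∅ univ ∅)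

theorem splitsAt_of_isAdjClosed (c : MultConn) (F : Formula) {S : Set ℕ}
    (hS : (trans F).IsAdjClosed c S) : SplitsAt c F S := by
  induction F generalizing S with
  | parr A B ihA ihB =>
    cases c
    · exact splitsAt_bin (c := .parr) ihA ihB hS
    · exact splitsAt_of_isAdjConnected (isAdjConnected_trans (by simp [Formula.bin])) hS
  | tens A B ihA ihB =>
    cases c
    · exact splitsAt_of_isAdjConnected (isAdjConnected_trans (by simp [Formula.bin])) hS
    · exact splitsAt_bin (c := .tens) ihA ihB hS
  | _ =>
    exact splitsAt_of_isAdjConnected (isAdjConnected_trans (by cases c <;> simp [Formula.bin])) hS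

/-! ### Isomorphic translations come from AC-equivalent formulas -/

lemma aceq_bin_of_iso {c : MultConn} {A B F' : Formula}
    (ihA : ∀ {A'}, Iso (trans A) (trans A') → ACEq A A')
    (ihB : ∀ {B'}, Iso (trans B) (trans B') → ACEq B B')
    (h : Iso (trans (.bin c A B)) (trans F')) : ACEq (.bin c A B) F' := by
  obtain ⟨f, hf⟩ := iso_iff_exists_isoVia.1 h.symm
  -- the vertices of `⟦F'⟧` sent to `⟦A⟧` form a union of `c`-components
  have hfS : MarkedIso f (trans F') (f ⁻¹' pairSet univ ∅) (bin c (trans A) (trans B))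
      (pairSet univ ∅) := ⟨by simpa using hf, fun _ _ => Iff.rfl⟩
  -- it is proper and nonempty, since `⟦A⟧` and `⟦B⟧` both have vertices
  obtain ⟨a, ha⟩ := trans_verts_nonempty A
  obtain ⟨b, hb⟩ := trans_verts_nonempty B
  rcases splitsAt_of_isAdjClosed c F' (hfS.isAdjClosed isAdjClosed_bin_pairSet_univ_empty) with
    ⟨-, k, hk⟩ | ⟨-, k, hk⟩ | ⟨B', C', hF', k, hk⟩
  · simpa using (hfS.symm.trans hk).mem_iff (2 * a) (by simpa)
  · simpa using (hfS.symm.trans hk).mem_iff (2 * b + 1) (by simpa)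
  · obtain ⟨hA, hB⟩ := (hfS.symm.trans (by simpa using hk)).iso_of_bin
    exact (ACEq.bin_congr (ihA hA) (ihB hB)).trans hF'.symm

lemma one_lt_card_verts_gparr (hG : G.verts.Nonempty) (hH : H.verts.Nonempty) :
    1 < (gparr G H).verts.card := by
  obtain ⟨a, ha⟩ := hG
  obtain ⟨b, hb⟩ := hH
  exact Finset.one_lt_card.2 ⟨2 * a, by simpa, 2 * b + 1, by simpa, by simp⟩

lemma not_iso_point_of_one_lt_card {l : GLabel} (h : 1 < H.verts.card) : ¬ Iso (point l) H :=
  fun hi => by simp [← hi.card_verts_eq, point] at h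

lemma eq_of_iso_point {l l' : GLabel} (h : Iso (point l) (point l')) : l = l' := by
  obtain ⟨f, hf⟩ := iso_iff_exists_isoVia.1 h
  exact (hf.map_lab 0 (by simp [point])).symm

def IsRoot (G : LabGraph) (r : ℕ) : Prop :=
  r ∈ G.verts ∧ ∀ v ∈ G.verts, v ≠ r → G.lt r v

lemma IsoVia.isRoot {f : ℕ → ℕ} {r : ℕ} (hf : IsoVia f G H) (hr : G.IsRoot r) :
    H.IsRoot (f r) := by
  refine ⟨hf.map_mem hr.1, fun w hw hwr => ?_⟩
  obtain ⟨v, hv, rfl⟩ := hf.bijOn.surjOn hw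
  exact (hf.map_lt _ hr.1 _ hv).2 (hr.2 v hv fun h => hwr (h ▸ rfl))

lemma mem_gseq_point {l : GLabel} {v : ℕ} :
    v ∈ (gseq (point l) H).verts ↔ v = 0 ∨ ∃ b ∈ H.verts, v = 2 * b + 1 := by
  simp [gseq, gparr, point, eq_comm]

lemma isRoot_gseq_point (l : GLabel) (H : LabGraph) : (gseq (point l) H).IsRoot 0 := by
  refine ⟨by simp [mem_gseq_point], fun v hv hv0 => ?_⟩
  obtain ⟨b, hb, rfl⟩ := (mem_gseq_point.1 hv).resolve_left hv0
  simp [gseq, gparr, point, hb]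

lemma IsRoot.eq_zero_of_gseq_point {l : GLabel} {r : ℕ} (hr : (gseq (point l) H).IsRoot r) :
    r = 0 := by
  by_contra hr0
  simpa [gseq, gparr, point] using hr.2 0 (by simp [mem_gseq_point]) (Ne.symm hr0)

lemma not_isRoot_bin {c : MultConn} {r : ℕ} (hG : G.verts.Nonempty) (hH : H.verts.Nonempty) :
    ¬ (bin c G H).IsRoot r := by
  rintro ⟨hr, hlt⟩
  obtain ⟨a, ha⟩ := hG
  obtain ⟨b, hb⟩ := hH
  rcases exists_of_mem_bin hr with ⟨r, -, rfl⟩ | ⟨r, -, rfl⟩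
  · simpa using hlt (2 * b + 1) (by simpa) (by simp)
  · simpa using hlt (2 * a) (by simpa) (by simp)

lemma eq_and_iso_of_iso_gseq_point {l l' : GLabel}
    (h : Iso (gseq (point l) G) (gseq (point l') G')) : l = l' ∧ Iso G G' := by
  obtain ⟨f, hf⟩ := iso_iff_exists_isoVia.1 h
  have hf0 : f 0 = 0 := (hf.isRoot (isRoot_gseq_point l G)).eq_zero_of_gseq_point
  have h0 : 0 ∈ (gseq (point l) G).verts := (isRoot_gseq_point l G).1
  have hodd {l'' : GLabel} {H : LabGraph} {v : ℕ} (hv : v ∈ (gseq (point l'') H).verts) :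
      v ∈ range (2 * · + 1) ↔ v ≠ 0 := by
    rcases mem_gseq_point.1 hv with rfl | ⟨b, -, rfl⟩ <;> simp
  refine ⟨by simpa [hf0, gseq, gparr, point] using (hf.map_lab 0 h0).symm, ?_⟩
  refine MarkedIso.iso_of_isInducedVia ⟨hf, fun v hv => ?_⟩ (isInducedVia_gseq_right _ _)
    (isInducedVia_gseq_right _ _)
  rw [hodd hv, hodd (hf.map_mem hv), ← hf.bijOn.injOn.ne_iff hv h0, hf0]

lemma exists_of_iso_gseq_point {l : GLabel} {F' : Formula} (hG : G.verts.Nonempty)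
    (h : Iso (gseq (point l) G) (trans F')) :
    ∃ A', Iso G (trans A') ∧ (F' = .bang A' ∧ l = .bang ∨ F' = .quest A' ∧ l = .quest) := by
  cases F' with
  | atom _ | natom _ | one | bot | hole =>
    exact absurd h.symm
      (not_iso_point_of_one_lt_card (one_lt_card_verts_gparr ⟨0, by simp [point]⟩ hG))
  | parr A' B' =>
    obtain ⟨f, hf⟩ := iso_iff_exists_isoVia.1 h
    exact absurd (hf.isRoot (isRoot_gseq_point l G))
      (not_isRoot_bin (c := .parr) (trans_verts_nonempty A') (trans_verts_nonempty B'))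
  | tens A' B' =>
    obtain ⟨f, hf⟩ := iso_iff_exists_isoVia.1 h
    exact absurd (hf.isRoot (isRoot_gseq_point l G))
      (not_isRoot_bin (c := .tens) (trans_verts_nonempty A') (trans_verts_nonempty B'))
  | bang A' =>
    obtain ⟨rfl, hA⟩ := eq_and_iso_of_iso_gseq_point h
    exact ⟨A', hA, .inl ⟨rfl, rfl⟩⟩
  | quest A' =>
    obtain ⟨rfl, hA⟩ := eq_and_iso_of_iso_gseq_point h
    exact ⟨A', hA, .inr ⟨rfl, rfl⟩⟩

theorem aceq_of_iso_trans {F F' : Formula} (h : Iso (trans F) (trans F')) : ACEq F F' := by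
  induction F generalizing F' with
  | parr A B ihA ihB => exact aceq_bin_of_iso (c := .parr) ihA ihB h
  | tens A B ihA ihB => exact aceq_bin_of_iso (c := .tens) ihA ihB h
  | bang A ih =>
    obtain ⟨A', hA, ⟨rfl, -⟩ | ⟨-, hl⟩⟩ := exists_of_iso_gseq_point (trans_verts_nonempty A) h
    · exact .bangCongr (ih hA)
    · cases hl
  | quest A ih =>
    obtain ⟨A', hA, ⟨-, hl⟩ | ⟨rfl, -⟩⟩ := exists_of_iso_gseq_point (trans_verts_nonempty A) h
    · cases hl
    · exact .questCongr (ih hA)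
  | atom _ | natom _ | one | bot | hole =>
    cases F' with
    | atom _ | natom _ | one | bot | hole => cases eq_of_iso_point h <;> exact .refl _
    | parr A' B' | tens A' B' =>
      exact absurd h (not_iso_point_of_one_lt_card
        (one_lt_card_verts_gparr (trans_verts_nonempty A') (trans_verts_nonempty B')))
    | bang A' | quest A' =>
      exact absurd h (not_iso_point_of_one_lt_card
        (one_lt_card_verts_gparr ⟨0, by simp [point]⟩ (trans_verts_nonempty A')))

end LabGraph

/-- For any two formulas `F` and `F'`, their translations are isomorphic
as labeled mixed graphs iff `F` and `F'` are equivalent modulo associativity and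
commutativity of tensor and par. -/
theorem trans_iso_iff_aceq (F F' : Formula) :
    LabGraph.Iso (LabGraph.trans F) (LabGraph.trans F') ↔ ACEq F F' :=
  ⟨LabGraph.aceq_of_iso_trans, LabGraph.iso_trans_of_aceq⟩
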